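/- arXiv:2209.12204 — 2 statements merged into one kernel-verified Lean document; each statement's English description precedes it below -/
import Mathlib

section
/- Let V and W be complex Hilbert spaces. Let a be a sesquilinear form on V that is bounded with constant M ≥ 0 (|a(u,v)| ≤ M‖u‖_V‖v‖_V for all u,v ∈ V) and coercive with constant α > 0 (Re a(u,u) ≥ α‖u‖_V² for all u ∈ V). Let ǎ be a bounded coercive sesquilinear form on W, let J : W → V be a continuous linear operator, and let θ ∈ [0, π/2) be such that ǎ(v,v) − a(Jv,Jv) ∈ Σ̄_θ for all v ∈ W. Let η : V → ℂ be a continuous conjugate-linear functional, and suppose u ∈ V satisfies a(u,v) = η(v) for all v ∈ V, and ǔ ∈ W satisfies ǎ(ǔ,v) = η(Jv) for all v ∈ W. Then, with c := 1 + tan θ, one has ‖u − Jǔ‖_V² ≤ inf_{v ∈ W} ( (M²/α²)‖u − Jv‖_V² + (c²/(2α))·|ǎ(v,v) − a(Jv,Jv)| ). -/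
/-- The closed sector `Σ̄_θ = {z ∈ ℂ : Re z ≥ 0 and |Im z| ≤ tan θ · Re z}`. -/
def sector (θ : ℝ) : Set ℂ :=
  {z : ℂ | 0 ≤ z.re ∧ |z.im| ≤ Real.tan θ * z.re}

/-! The difference `b := ǎ - a(J·, J·)` is a sesquilinear form with values in the sector `Σ̄_θ`, so
polarization gives the Cauchy–Schwarz-type bound `2 Re b(x,y) ≤ c (Re b(x,x) + Re b(y,y))`.
Galerkin orthogonality `a(u - Jǔ, Jw) = b(ǔ, w)` splits `a(e, e)` for `e = u - Jǔ` as
`a(e, u - Jv) + b(v, v - ǔ) - b(v - ǔ, v - ǔ)`; coercivity, boundedness, the sector bound weighted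
by `c / 2`, and Young's inequality then give the estimate for every `v ∈ W`. -/

open Complex

section SectorialForm

variable {E : Type*} [AddCommGroup E] [Module ℂ E] (b : E →ₗ[ℂ] E →ₗ⋆[ℂ] ℂ) {θ : ℝ}

-- Polarize along `x - y`, `x + i y` and `x - i y`.
theorem two_mul_re_le_of_mem_sector (hb : ∀ x, b x x ∈ sector θ) (x y : E) :
    2 * (b x y).re ≤ (1 + Real.tan θ) * ((b x x).re + (b y y).re) := by
  have hsub := (hb (x - y)).1
  have hplusI := (abs_le.1 (hb (x + I • y)).2).1
  have hminusI := (abs_le.1 (hb (x - I • y)).2).2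
  simp only [map_sub, map_add, map_smul, map_smulₛₗ, LinearMap.sub_apply, LinearMap.add_apply,
    LinearMap.smul_apply, smul_eq_mul, conj_I, sub_re, add_re, sub_im, add_im, mul_re, mul_im,
    neg_re, neg_im, I_re, I_im] at hsub hplusI hminusI
  nlinarith

theorem re_sub_re_le_of_mem_sector (hθ : 0 ≤ Real.tan θ) (hb : ∀ x, b x x ∈ sector θ)
    (x y : E) :
    (b x y).re - (b y y).re ≤ (1 + Real.tan θ) ^ 2 / 4 * (b x x).re := by
  set c := 1 + Real.tan θ
  have hc : 0 < c := by positivity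
  have h := two_mul_re_le_of_mem_sector b hb (((c / 2 : ℝ) : ℂ) • x) y
  simp only [map_smul, map_smulₛₗ, LinearMap.smul_apply, smul_eq_mul, conj_ofReal,
    re_ofReal_mul] at h
  nlinarith

end SectorialForm

theorem sq_le_of_mul_sq_le_mul_add {α M e d k : ℝ} (hα : 0 < α)
    (h : α * e ^ 2 ≤ M * e * d + k) :
    e ^ 2 ≤ M ^ 2 / α ^ 2 * d ^ 2 + 2 * k / α := by
  have young : 2 * α * (M * e * d) ≤ α ^ 2 * e ^ 2 + M ^ 2 * d ^ 2 := by
    nlinarith [sq_nonneg (α * e - M * d)]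
  have cleared : α ^ 2 * e ^ 2 ≤ M ^ 2 * d ^ 2 + 2 * α * k := by nlinarith
  have hrhs : M ^ 2 / α ^ 2 * d ^ 2 + 2 * k / α = (M ^ 2 * d ^ 2 + 2 * α * k) / α ^ 2 := by
    field_simp
  rw [hrhs, le_div_iff₀ (by positivity)]
  linarith

section Cea

variable {V W : Type*} [SeminormedAddCommGroup V] [Module ℂ V] [AddCommGroup W] [Module ℂ W]
  (a : V →ₗ[ℂ] V →ₗ⋆[ℂ] ℂ) (a' : W →ₗ[ℂ] W →ₗ⋆[ℂ] ℂ) (J : W →ₗ[ℂ] V)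

theorem norm_sub_sq_le_of_mem_sector {M α θ : ℝ} (ha_bdd : ∀ u v : V, ‖a u v‖ ≤ M * ‖u‖ * ‖v‖)
    (hα : 0 < α) (ha_coer : ∀ u : V, α * ‖u‖ ^ 2 ≤ (a u u).re) (hθ : 0 ≤ Real.tan θ)
    (hsec : ∀ v : W, a' v v - a (J v) (J v) ∈ sector θ)
    {u : V} {u' : W} (hgal : ∀ w : W, a u (J w) = a' u' w) (v : W) :
    ‖u - J u'‖ ^ 2 ≤
      M ^ 2 / α ^ 2 * ‖u - J v‖ ^ 2 +
        (1 + Real.tan θ) ^ 2 / (2 * α) * ‖a' v v - a (J v) (J v)‖ := by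
  set b := a' - (a.comp J).compl₂ J
  have hb : ∀ x y, b x y = a' x y - a (J x) (J y) := fun _ _ => rfl
  set e := u - J u'
  have hsplit : a e e = a e (u - J v) + (b v (v - u') - b (v - u') (v - u')) := by
    have hgal' : ∀ w, a e (J w) = b u' w := fun w => by
      simp only [e, hb, map_sub, LinearMap.sub_apply, hgal]
    calc a e e = a e ((u - J v) + J (v - u')) := by congr 1; simp only [e, map_sub]; abel
      _ = a e (u - J v) + b u' (v - u') := by rw [map_add, hgal']
      _ = _ := by rw [← LinearMap.sub_apply, ← map_sub, sub_sub_cancel]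
  have hcoer : α * ‖e‖ ^ 2 ≤ M * ‖e‖ * ‖u - J v‖ + (1 + Real.tan θ) ^ 2 / 4 * ‖b v v‖ := by
    calc α * ‖e‖ ^ 2 ≤ (a e e).re := ha_coer e
      _ = (a e (u - J v)).re + ((b v (v - u')).re - (b (v - u') (v - u')).re) := by
        rw [hsplit, add_re, sub_re]
      _ ≤ M * ‖e‖ * ‖u - J v‖ + (1 + Real.tan θ) ^ 2 / 4 * ‖b v v‖ := by
        gcongr
        · exact (re_le_norm _).trans (ha_bdd _ _)
        · exact (re_sub_re_le_of_mem_sector b hθ hsec _ _).trans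
            (by gcongr; exact re_le_norm _)
  convert sq_le_of_mul_sq_le_mul_add hα hcoer using 2
  rw [hb]
  ring

end Cea

theorem stmt_0_general
    {V W : Type*} [NormedAddCommGroup V] [InnerProductSpace ℂ V]
    [NormedAddCommGroup W] [InnerProductSpace ℂ W]
    (a : V →ₗ[ℂ] V →ₗ⋆[ℂ] ℂ) (M : ℝ)
    (ha_bdd : ∀ u v : V, ‖a u v‖ ≤ M * ‖u‖ * ‖v‖)
    (α : ℝ) (hα : 0 < α) (ha_coer : ∀ u : V, α * ‖u‖ ^ 2 ≤ (a u u).re)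
    (a' : W →ₗ[ℂ] W →ₗ⋆[ℂ] ℂ)
    (J : W →L[ℂ] V) (θ : ℝ) (hθ : θ ∈ Set.Ico 0 (Real.pi / 2))
    (hsec : ∀ v : W, a' v v - a (J v) (J v) ∈ sector θ)
    (η : V →L⋆[ℂ] ℂ) (u : V) (hu : ∀ v : V, a u v = η v)
    (u' : W) (hu' : ∀ v : W, a' u' v = η (J v)) :
    ‖u - J u'‖ ^ 2 ≤
      ⨅ v : W, (M ^ 2 / α ^ 2 * ‖u - J v‖ ^ 2 +
        (1 + Real.tan θ) ^ 2 / (2 * α) * ‖a' v v - a (J v) (J v)‖) := by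
  have htan : 0 ≤ Real.tan θ := Real.tan_nonneg_of_nonneg_of_le_pi_div_two hθ.1 hθ.2.le
  have hgal : ∀ w : W, a u (J w) = a' u' w := fun w => (hu (J w)).trans (hu' w).symm
  exact le_ciInf (norm_sub_sq_le_of_mem_sector a a' J ha_bdd hα ha_coer htan hsec hgal)

/-- Proposition: extended Céa lemma, infimum form. -/
theorem stmt_0
    {V W : Type*} [NormedAddCommGroup V] [InnerProductSpace ℂ V] [CompleteSpace V]
    [NormedAddCommGroup W] [InnerProductSpace ℂ W] [CompleteSpace W]
    (a : V →ₗ[ℂ] V →ₗ⋆[ℂ] ℂ) (M : ℝ) (hM : 0 ≤ M)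
    (ha_bdd : ∀ u v : V, ‖a u v‖ ≤ M * ‖u‖ * ‖v‖)
    (α : ℝ) (hα : 0 < α) (ha_coer : ∀ u : V, α * ‖u‖ ^ 2 ≤ (a u u).re)
    (a' : W →ₗ[ℂ] W →ₗ⋆[ℂ] ℂ)
    (ha'_bdd : ∃ M' : ℝ, ∀ w v : W, ‖a' w v‖ ≤ M' * ‖w‖ * ‖v‖)
    (ha'_coer : ∃ α' : ℝ, 0 < α' ∧ ∀ v : W, α' * ‖v‖ ^ 2 ≤ (a' v v).re)
    (J : W →L[ℂ] V) (θ : ℝ) (hθ : θ ∈ Set.Ico 0 (Real.pi / 2))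
    (hsec : ∀ v : W, a' v v - a (J v) (J v) ∈ sector θ)
    (η : V →L⋆[ℂ] ℂ) (u : V) (hu : ∀ v : V, a u v = η v)
    (u' : W) (hu' : ∀ v : W, a' u' v = η (J v)) :
    ‖u - J u'‖ ^ 2 ≤
      ⨅ v : W, (M ^ 2 / α ^ 2 * ‖u - J v‖ ^ 2 +
        (1 + Real.tan θ) ^ 2 / (2 * α) * ‖a' v v - a (J v) (J v)‖) :=
  stmt_0_general a M ha_bdd α hα ha_coer a' J θ hθ hsec η u hu u' hu'
end

section
/- Let V and W be complex Hilbert spaces. Let a be a sesquilinear form on V that is bounded with constant M ≥ 0 and coercive with constant α > 0. Let ǎ be a sesquilinear form on W, let J : W → V be a continuous linear operator, and let θ ∈ [0, π/2) be such that ǎ(v,v) − a(Jv,Jv) ∈ Σ̄_θ for all v ∈ W. Let η : V → ℂ be a continuous conjugate-linear functional, and suppose u ∈ V satisfies a(u,v) = η(v) for all v ∈ V, and ǔ ∈ W satisfies ǎ(ǔ,v) = η(Jv) for all v ∈ W. Then, with c := 1 + tan θ, for every v ∈ W one has ‖u − Jǔ‖_V² ≤ (M²/α²)‖u − Jv‖_V²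 + (c²/(2α))·Re( ǎ(v,v) − a(Jv,Jv) ). -/
lemma sect_cs {W : Type*} [AddCommGroup W] [Module ℂ W] (e : W → W → ℂ)
    (h1 : ∀ x y z : W, e (x + y) z = e x z + e y z)
    (h2 : ∀ x y z : W, e x (y + z) = e x y + e x z)
    (h3 : ∀ (c : ℂ) (x y : W), e (c • x) y = c * e x y)
    (h4 : ∀ (c : ℂ) (x y : W), e x (c • y) = (starRingEnd ℂ) c * e x y)
    (t : ℝ) (ht : 0 ≤ t)
    (hre : ∀ x, 0 ≤ (e x x).re) (him : ∀ x, |(e x x).im| ≤ t * (e x x).re) :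
    ∀ x y : W, (e x y).re ≤ (e x x).re + (1 + t) ^ 2 / 4 * (e y y).re := by
  have hsub1 : ∀ x y z : W, e (x - y) z = e x z - e y z := by
    intro x y z
    have := h1 (x - y) y z
    rw [sub_add_cancel] at this
    linear_combination -this
  have hsub2 : ∀ x y z : W, e x (y - z) = e x y - e x z := by
    intro x y z
    have := h2 x (y - z) z
    rw [sub_add_cancel] at this
    linear_combination -this
  -- expansions
  have E1 : ∀ x y : W, e (x + y) (x + y) = e x x + e x y + e y x + e y y := by
    intro x y; rw [h1, h2, h2]; ring
  have E2 : ∀ x y : W, e (x - y) (x - y) = e x x - e x y - e y x + e y y := by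
    intro x y; rw [hsub1, hsub2, hsub2]; ring
  have E3 : ∀ x y : W, e (x + Complex.I • y) (x + Complex.I • y)
      = e x x - Complex.I * e x y + Complex.I * e y x + e y y := by
    intro x y
    rw [h1, h2, h2, h3, h3, h4, h4]
    simp [Complex.conj_I]
    linear_combination (-(e y y)) * Complex.I_sq
  have E4 : ∀ x y : W, e (x - Complex.I • y) (x - Complex.I • y)
      = e x x + Complex.I * e x y - Complex.I * e y x + e y y := by
    intro x y
    rw [hsub1, hsub2, hsub2, h3, h3, h4, h4]
    simp [Complex.conj_I]
    linear_combination (-(e y y)) * Complex.I_sq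
  -- step 1: Re e(x,y) ≤ (1+t)(p x + p y)/2
  have step1 : ∀ x y : W, (e x y).re ≤ (1 + t) * ((e x x).re + (e y y).re) / 2 := by
    intro x y
    have hp1 := hre (x - y)
    have hi1 := abs_le.mp (him (x + Complex.I • y))
    have hi2 := abs_le.mp (him (x - Complex.I • y))
    have hr1 := hre (x + Complex.I • y)
    have hr2 := hre (x - Complex.I • y)
    have e1 := congrArg Complex.re (E1 x y)
    have e2 := congrArg Complex.re (E2 x y)
    have e3r := congrArg Complex.re (E3 x y)
    have e3i := congrArg Complex.im (E3 x y)
    have e4r := congrArg Complex.re (E4 x y)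
    have e4i := congrArg Complex.im (E4 x y)
    simp only [Complex.add_re, Complex.sub_re, Complex.add_im, Complex.sub_im,
      Complex.mul_re, Complex.mul_im, Complex.I_re, Complex.I_im] at e1 e2 e3r e3i e4r e4i
    nlinarith [hre x, hre y]
  -- step 2: scaling
  intro x y
  have hc0 : (0:ℝ) < 1 + t := by linarith
  set l : ℝ := Real.sqrt (2 / (1 + t)) with hldef
  have hl0 : 0 < l := Real.sqrt_pos.mpr (by positivity)
  have hl2 : l ^ 2 = 2 / (1 + t) := Real.sq_sqrt (by positivity)
  have key := step1 ((l : ℂ) • x) (((l⁻¹ : ℝ) : ℂ) • y)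
  simp only [h3, h4, Complex.conj_ofReal, Complex.re_ofReal_mul] at key
  have hxy : l * (l⁻¹ * (e x y).re) = (e x y).re := by field_simp
  have hxx : l * (l * (e x x).re) = 2 / (1 + t) * (e x x).re := by
    rw [← mul_assoc, ← sq, hl2]
  have hyy : l⁻¹ * (l⁻¹ * (e y y).re) = (1 + t) / 2 * (e y y).re := by
    rw [← mul_assoc, ← mul_inv, ← sq, hl2]
    congr 1
    rw [inv_div]
  rw [hxy, hxx, hyy] at key
  calc (e x y).re ≤ (1 + t) * (2 / (1 + t) * (e x x).re + (1 + t) / 2 * (e y y).re) / 2 := key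
    _ = (e x x).re + (1 + t) ^ 2 / 4 * (e y y).re := by field_simp; ring

/-- Extended Céa lemma, pointwise form with real part on the right-hand side. -/
theorem stmt_1
    {V W : Type*} [NormedAddCommGroup V] [InnerProductSpace ℂ V] [CompleteSpace V]
    [NormedAddCommGroup W] [InnerProductSpace ℂ W] [CompleteSpace W]
    (a : V →ₗ[ℂ] V →ₗ⋆[ℂ] ℂ) (M : ℝ) (hM : 0 ≤ M)
    (ha_bdd : ∀ u v : V, ‖a u v‖ ≤ M * ‖u‖ * ‖v‖)
    (α : ℝ) (hα : 0 < α) (ha_coer : ∀ u : V, α * ‖u‖ ^ 2 ≤ (a u u).re)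
    (a' : W →ₗ[ℂ] W →ₗ⋆[ℂ] ℂ)
    (J : W →L[ℂ] V) (θ : ℝ) (hθ : θ ∈ Set.Ico 0 (Real.pi / 2))
    (hsec : ∀ v : W, a' v v - a (J v) (J v) ∈ sector θ)
    (η : V →L⋆[ℂ] ℂ) (u : V) (hu : ∀ v : V, a u v = η v)
    (u' : W) (hu' : ∀ v : W, a' u' v = η (J v)) :
    ∀ v : W, ‖u - J u'‖ ^ 2 ≤
      M ^ 2 / α ^ 2 * ‖u - J v‖ ^ 2 +
        (1 + Real.tan θ) ^ 2 / (2 * α) * (a' v v - a (J v) (J v)).re := by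
  intro v
  set t := Real.tan θ with htdef
  have ht : 0 ≤ t := Real.tan_nonneg_of_nonneg_of_le_pi_div_two hθ.1 (le_of_lt hθ.2)
  set E : W → W → ℂ := fun x y => a' x y - a (J x) (J y) with hE
  have h1 : ∀ x y z : W, E (x + y) z = E x z + E y z := by
    intro x y z
    simp only [hE, map_add, LinearMap.add_apply]
    ring
  have h2 : ∀ x y z : W, E x (y + z) = E x y + E x z := by
    intro x y z
    simp only [hE, map_add]
    ring
  have h3 : ∀ (c : ℂ) (x y : W), E (c • x) y = c * E x y := by
    intro c x y
    simp only [hE, map_smul, LinearMap.smul_apply, smul_eq_mul]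
    ring
  have h4 : ∀ (c : ℂ) (x y : W), E x (c • y) = (starRingEnd ℂ) c * E x y := by
    intro c x y
    simp only [hE, map_smulₛₗ, smul_eq_mul, RingHom.id_apply]
    ring
  have hre : ∀ x : W, 0 ≤ (E x x).re := fun x => (hsec x).1
  have him : ∀ x : W, |(E x x).im| ≤ t * (E x x).re := fun x => (hsec x).2
  have hcs := sect_cs E h1 h2 h3 h4 t ht hre him
  have hsub2 : ∀ x y z : W, E x (y - z) = E x y - E x z := by
    intro x y z
    have := h2 x (y - z) z
    rw [sub_add_cancel] at this
    linear_combination -this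
  -- the Galerkin orthogonality-type identity
  have horth : ∀ w : W, a (u - J u') (J w) = E u' w := by
    intro w
    simp only [hE, map_sub, LinearMap.sub_apply]
    rw [hu (J w), hu' w]
  have hsplit : (a (u - J u')) (u - J u')
      = a (u - J u') (u - J v) + E u' (v - u') := by
    have hde : u - J u' = (u - J v) + J (v - u') := by
      rw [map_sub]
      abel
    calc (a (u - J u')) (u - J u') = (a (u - J u')) ((u - J v) + J (v - u')) := by
          rw [← hde]
      _ = a (u - J u') (u - J v) + a (u - J u') (J (v - u')) := by rw [map_add]
      _ = a (u - J u') (u - J v) + E u' (v - u') := by rw [horth]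
  -- bound the consistency term
  have hcons : (E u' (v - u')).re ≤ (1 + t) ^ 2 / 4 * (E v v).re := by
    have h5 : (E u' v).re ≤ (E u' u').re + (1 + t) ^ 2 / 4 * (E v v).re := hcs u' v
    rw [hsub2]
    simp only [Complex.sub_re]
    linarith
  -- the main chain
  have hX : α * ‖u - J u'‖ ^ 2 ≤ (a (u - J u') (u - J u')).re := ha_coer _
  have hb : (a (u - J u') (u - J v)).re ≤ M * ‖u - J u'‖ * ‖u - J v‖ := by
    calc (a (u - J u') (u - J v)).re ≤ ‖a (u - J u') (u - J v)‖ := Complex.re_le_norm _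
      _ ≤ M * ‖u - J u'‖ * ‖u - J v‖ := ha_bdd _ _
  have hmain : α * ‖u - J u'‖ ^ 2
      ≤ M * ‖u - J u'‖ * ‖u - J v‖ + (1 + t) ^ 2 / 4 * (E v v).re := by
    rw [hsplit] at hX
    simp only [Complex.add_re] at hX
    linarith
  -- conclude
  have hEv : (a' v v - a (J v) (J v)).re = (E v v).re := rfl
  rw [hEv]
  have hXn : (0:ℝ) ≤ ‖u - J u'‖ := norm_nonneg _
  have hYn : (0:ℝ) ≤ ‖u - J v‖ := norm_nonneg _
  have hEvn : (0:ℝ) ≤ (E v v).re := hre v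
  have hkey : α ^ 2 / 2 * ‖u - J u'‖ ^ 2
      ≤ M ^ 2 / 2 * ‖u - J v‖ ^ 2 + α * ((1 + t) ^ 2 / 4 * (E v v).re) := by
    nlinarith [sq_nonneg (α * ‖u - J u'‖ - M * ‖u - J v‖), mul_le_mul_of_nonneg_left hmain (le_of_lt hα)]
  calc ‖u - J u'‖ ^ 2 = 2 / α ^ 2 * (α ^ 2 / 2 * ‖u - J u'‖ ^ 2) := by field_simp
    _ ≤ 2 / α ^ 2 * (M ^ 2 / 2 * ‖u - J v‖ ^ 2 + α * ((1 + t) ^ 2 / 4 * (E v v).re)) := by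
        apply mul_le_mul_of_nonneg_left hkey (by positivity)
    _ = M ^ 2 / α ^ 2 * ‖u - J v‖ ^ 2 + (1 + t) ^ 2 / (2 * α) * (E v v).re := by
        field_simp
        ring
end
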